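/- Consider a one-parameter exponential family f(x;θ) = c(x) exp(θx − b(θ)) with prior density p for θ. Suppose the true density f₀ has mean μ₀ = b'(θ₀) and variance σ₀² ∈ (0,∞), and the model density f(·;θ₀) has mean b'(θ₀) and variance b''(θ₀) ∈ (0,∞). Assume all relevant integrals are finite. Then the power parameter satisfies w² = (b''(θ₀) + c₀) / (σ₀² + c₀), where c₀ = ∫ (b'(θ₀) − b'(θ))² p(θ) dθ ≥ 0; in particular w < 1 if and only if σ₀² > b''(θ₀), w > 1 if and only if σ₀² < b''(θ₀), and w = 1 if and only if σ₀² = b''(θ₀). -/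

import Mathlib

/-!
Expanding the square around `μ = b'(θ₀)` gives
`Δ(x) = (x - μ)² + 2 (x - μ) ∫ (μ - b'(θ)) p(θ) dθ + c₀`, and the linear term integrates to zero
against any density with mean `μ`. Hence `∫ Δ f = Var_f + c₀` for both `f = f(·;θ₀)` and `f = f₀`,
so `w² = (b''(θ₀) + c₀) / (σ₀² + c₀)`, and `w` compares with `1` as `b''(θ₀)` compares with `σ₀²`.
-/

open MeasureTheory

theorem integral_quadratic_mul_of_mean {ρ : Measure ℝ} {h : ℝ → ℝ} (μ m c : ℝ)
    (hh : Integrable h ρ) (hh_one : ∫ x, h x ∂ρ = 1)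
    (hxh : Integrable (fun x => x * h x) ρ) (hh_mean : ∫ x, x * h x ∂ρ = μ)
    (hvar : Integrable (fun x => (x - μ) ^ 2 * h x) ρ) :
    ∫ x, ((x - μ) ^ 2 + 2 * (x - μ) * m + c) * h x ∂ρ = ∫ x, (x - μ) ^ 2 * h x ∂ρ + c := by
  calc ∫ x, ((x - μ) ^ 2 + 2 * (x - μ) * m + c) * h x ∂ρ
      = ∫ x, ((x - μ) ^ 2 * h x + 2 * m * (x * h x) + (c - 2 * m * μ) * h x) ∂ρ := by
        congr 1; funext x; ring
    _ = _ := by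
        rw [integral_add _ (hh.const_mul _), integral_add hvar (hxh.const_mul _),
          integral_const_mul, integral_const_mul, hh_one, hh_mean]
        · ring
        · exact hvar.add (hxh.const_mul _)

section PriorAverage

variable {Θ : Type*} [MeasurableSpace Θ] {ν : Measure Θ} {u p : Θ → ℝ}

theorem integrable_mul_of_integrable_sq_mul (hp : Integrable p ν) (hp_nonneg : 0 ≤ p)
    (hu : AEStronglyMeasurable u ν) (hup : Integrable (fun θ => u θ ^ 2 * p θ) ν) :
    Integrable (fun θ => u θ * p θ) ν := by
  refine (hup.add hp).mono (hu.mul hp.aestronglyMeasurable) (ae_of_all _ fun θ => ?_)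
  have hpθ : 0 ≤ p θ := hp_nonneg θ
  have hsq : |u θ| ≤ u θ ^ 2 + 1 := by nlinarith [sq_abs (u θ), sq_nonneg (|u θ| - 1)]
  rw [Pi.add_apply, Real.norm_eq_abs, Real.norm_eq_abs, abs_mul, abs_of_nonneg hpθ,
    abs_of_nonneg (add_nonneg (mul_nonneg (sq_nonneg _) hpθ) hpθ)]
  nlinarith

theorem integral_sub_sq_mul (x μ : ℝ) (hp : Integrable p ν) (hp_one : ∫ θ, p θ ∂ν = 1)
    (hup : Integrable (fun θ => (μ - u θ) * p θ) ν)
    (hup2 : Integrable (fun θ => (μ - u θ) ^ 2 * p θ) ν) :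
    ∫ θ, (x - u θ) ^ 2 * p θ ∂ν
      = (x - μ) ^ 2 + 2 * (x - μ) * ∫ θ, (μ - u θ) * p θ ∂ν + ∫ θ, (μ - u θ) ^ 2 * p θ ∂ν := by
  calc ∫ θ, (x - u θ) ^ 2 * p θ ∂ν
      = ∫ θ, ((x - μ) ^ 2 * p θ + 2 * (x - μ) * ((μ - u θ) * p θ)
          + (μ - u θ) ^ 2 * p θ) ∂ν := by
        congr 1; funext θ; ring
    _ = _ := by
        rw [integral_add _ hup2, integral_add (hp.const_mul _) (hup.const_mul _),
          integral_const_mul, integral_const_mul, hp_one, mul_one]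
        exact (hp.const_mul _).add (hup.const_mul _)

theorem integral_integral_sub_sq_mul {ρ : Measure ℝ} {h : ℝ → ℝ} (μ : ℝ)
    (hp : Integrable p ν) (hp_nonneg : 0 ≤ p) (hp_one : ∫ θ, p θ ∂ν = 1)
    (hu : AEStronglyMeasurable u ν) (hup2 : Integrable (fun θ => (μ - u θ) ^ 2 * p θ) ν)
    (hh : Integrable h ρ) (hh_one : ∫ x, h x ∂ρ = 1)
    (hxh : Integrable (fun x => x * h x) ρ) (hh_mean : ∫ x, x * h x ∂ρ = μ)
    (hvar : Integrable (fun x => (x - μ) ^ 2 * h x) ρ) :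
    ∫ x, (∫ θ, (x - u θ) ^ 2 * p θ ∂ν) * h x ∂ρ
      = ∫ x, (x - μ) ^ 2 * h x ∂ρ + ∫ θ, (μ - u θ) ^ 2 * p θ ∂ν := by
  have hup := integrable_mul_of_integrable_sq_mul hp hp_nonneg
    (aestronglyMeasurable_const.sub hu) hup2
  calc ∫ x, (∫ θ, (x - u θ) ^ 2 * p θ ∂ν) * h x ∂ρ
      = ∫ x, ((x - μ) ^ 2 + 2 * (x - μ) * ∫ θ, (μ - u θ) * p θ ∂ν
          + ∫ θ, (μ - u θ) ^ 2 * p θ ∂ν) * h x ∂ρ := by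
        congr 1; funext x; rw [integral_sub_sq_mul x μ hp hp_one hup hup2]
    _ = _ := integral_quadratic_mul_of_mean μ _ _ hh hh_one hxh hh_mean hvar

end PriorAverage

theorem exponential_family_power_parameter_general
    (b : ℝ → ℝ) (θ₀ : ℝ)
    (p : ℝ → ℝ) (hp_nonneg : ∀ θ, 0 ≤ p θ)
    (hp_int : Integrable p) (hp_one : ∫ θ, p θ = 1)
    -- the true density f₀, with mean b'(θ₀) and variance σ₀²
    (f₀ : ℝ → ℝ)
    (hf₀_int : Integrable f₀) (hf₀_one : ∫ x, f₀ x = 1)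
    (hf₀_mean_int : Integrable (fun x => x * f₀ x))
    (hf₀_mean : ∫ x, x * f₀ x = deriv b θ₀)
    (σ₀sq : ℝ) (hσ_int : Integrable (fun x => (x - deriv b θ₀) ^ 2 * f₀ x))
    (hσ : σ₀sq = ∫ x, (x - deriv b θ₀) ^ 2 * f₀ x) (hσ_pos : 0 < σ₀sq)
    -- the model density f(·;θ₀), with mean b'(θ₀) and variance b''(θ₀)
    (g : ℝ → ℝ)
    (hg_int : Integrable g) (hg_one : ∫ x, g x = 1)
    (hg_mean_int : Integrable (fun x => x * g x))
    (hg_mean : ∫ x, x * g x = deriv b θ₀)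
    (hg_var_int : Integrable (fun x => (x - deriv b θ₀) ^ 2 * g x))
    (hg_var : ∫ x, (x - deriv b θ₀) ^ 2 * g x = deriv (deriv b) θ₀)
    (c₀ : ℝ) (hc₀ : c₀ = ∫ θ, (deriv b θ₀ - deriv b θ) ^ 2 * p θ)
    (hc₀_int : Integrable (fun θ => (deriv b θ₀ - deriv b θ) ^ 2 * p θ))
    -- the power parameter
    (w : ℝ) (hw_pos : 0 < w)
    (hw : w ^ 2 = (∫ x, (∫ θ, (x - deriv b θ) ^ 2 * p θ) * g x)
                / (∫ x, (∫ θ, (x - deriv b θ) ^ 2 * p θ) * f₀ x)) :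
    w ^ 2 = (deriv (deriv b) θ₀ + c₀) / (σ₀sq + c₀)
    ∧ (w < 1 ↔ σ₀sq > deriv (deriv b) θ₀)
    ∧ (w > 1 ↔ σ₀sq < deriv (deriv b) θ₀)
    ∧ (w = 1 ↔ σ₀sq = deriv (deriv b) θ₀) := by
  have hb' := (measurable_deriv b).aestronglyMeasurable (μ := volume)
  have hw' : w ^ 2 = (deriv (deriv b) θ₀ + c₀) / (σ₀sq + c₀) := by
    rw [hw, integral_integral_sub_sq_mul _ hp_int hp_nonneg hp_one hb' hc₀_int hg_int hg_one
        hg_mean_int hg_mean hg_var_int,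
      integral_integral_sub_sq_mul _ hp_int hp_nonneg hp_one hb' hc₀_int hf₀_int hf₀_one
        hf₀_mean_int hf₀_mean hσ_int, hg_var, ← hσ, ← hc₀]
  have hden : 0 < σ₀sq + c₀ :=
    add_pos_of_pos_of_nonneg hσ_pos (hc₀ ▸ integral_nonneg fun θ => by
      have := hp_nonneg θ; positivity)
  refine ⟨hw', ?_, ?_, ?_⟩
  · rw [gt_iff_lt, ← pow_lt_one_iff_of_nonneg hw_pos.le two_ne_zero, hw', div_lt_one hden,
      add_lt_add_iff_right]
  · rw [gt_iff_lt, ← one_lt_pow_iff_of_nonneg hw_pos.le two_ne_zero, hw', one_lt_div hden,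
      add_lt_add_iff_right]
  · rw [← pow_eq_one_iff_of_nonneg hw_pos.le two_ne_zero, hw', div_eq_one_iff_eq hden.ne',
      add_left_inj, eq_comm]

/-- For a one-parameter exponential family `f(x;θ) = c(x) exp(θx − b(θ))`
with prior `p`, true density `f₀` with mean `b'(θ₀)` and variance `σ₀²`, and model density
`f(·;θ₀)` with mean `b'(θ₀)` and variance `b''(θ₀)`, the power parameter defined by
`w² = ∫ Δ(x) f(x;θ₀) dx / ∫ Δ(x) f₀(x) dx` satisfies
`w² = (b''(θ₀) + c₀)/(σ₀² + c₀)` with `c₀ = ∫ (b'(θ₀) − b'(θ))² p(θ) dθ`; in particular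
`w < 1 ↔ σ₀² > b''(θ₀)`, `w > 1 ↔ σ₀² < b''(θ₀)`, and `w = 1 ↔ σ₀² = b''(θ₀)`. -/
theorem exponential_family_power_parameter
    (c : ℝ → ℝ) (hc_pos : ∀ x, 0 < c x) (hc_meas : Measurable c)
    (b : ℝ → ℝ) (θ₀ : ℝ)
    (p : ℝ → ℝ) (hp_meas : Measurable p) (hp_nonneg : ∀ θ, 0 ≤ p θ)
    (hp_int : Integrable p) (hp_one : ∫ θ, p θ = 1)
    -- the true density f₀, with mean b'(θ₀) and variance σ₀²
    (f₀ : ℝ → ℝ) (hf₀_meas : Measurable f₀) (hf₀_nonneg : ∀ x, 0 ≤ f₀ x)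
    (hf₀_int : Integrable f₀) (hf₀_one : ∫ x, f₀ x = 1)
    (hf₀_mean_int : Integrable (fun x => x * f₀ x))
    (hf₀_mean : ∫ x, x * f₀ x = deriv b θ₀)
    (σ₀sq : ℝ) (hσ_int : Integrable (fun x => (x - deriv b θ₀) ^ 2 * f₀ x))
    (hσ : σ₀sq = ∫ x, (x - deriv b θ₀) ^ 2 * f₀ x) (hσ_pos : 0 < σ₀sq)
    -- the model density f(·;θ₀), with mean b'(θ₀) and variance b''(θ₀)
    (g : ℝ → ℝ) (hg_def : ∀ x, g x = c x * Real.exp (θ₀ * x - b θ₀))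
    (hg_int : Integrable g) (hg_one : ∫ x, g x = 1)
    (hg_mean_int : Integrable (fun x => x * g x))
    (hg_mean : ∫ x, x * g x = deriv b θ₀)
    (hg_var_int : Integrable (fun x => (x - deriv b θ₀) ^ 2 * g x))
    (hg_var : ∫ x, (x - deriv b θ₀) ^ 2 * g x = deriv (deriv b) θ₀)
    (hb''_pos : 0 < deriv (deriv b) θ₀)
    -- all relevant integrals finite
    (hjoint_f₀ : Integrable
      (fun q : ℝ × ℝ => (q.1 - deriv b q.2) ^ 2 * f₀ q.1 * p q.2) (volume.prod volume))
    (hjoint_g : Integrable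
      (fun q : ℝ × ℝ => (q.1 - deriv b q.2) ^ 2 * g q.1 * p q.2) (volume.prod volume))
    (c₀ : ℝ) (hc₀ : c₀ = ∫ θ, (deriv b θ₀ - deriv b θ) ^ 2 * p θ)
    (hc₀_int : Integrable (fun θ => (deriv b θ₀ - deriv b θ) ^ 2 * p θ))
    -- the power parameter
    (w : ℝ) (hw_pos : 0 < w)
    (hw : w ^ 2 = (∫ x, (∫ θ, (x - deriv b θ) ^ 2 * p θ) * g x)
                / (∫ x, (∫ θ, (x - deriv b θ) ^ 2 * p θ) * f₀ x)) :
    w ^ 2 = (deriv (deriv b) θ₀ + c₀) / (σ₀sq + c₀)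
    ∧ (w < 1 ↔ σ₀sq > deriv (deriv b) θ₀)
    ∧ (w > 1 ↔ σ₀sq < deriv (deriv b) θ₀)
    ∧ (w = 1 ↔ σ₀sq = deriv (deriv b) θ₀) :=
  exponential_family_power_parameter_general b θ₀ p hp_nonneg hp_int hp_one f₀ hf₀_int hf₀_one
    hf₀_mean_int hf₀_mean σ₀sq hσ_int hσ hσ_pos g hg_int hg_one hg_mean_int hg_mean hg_var_int
    hg_var c₀ hc₀ hc₀_int w hw_pos hw
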